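/- arXiv:2010.14758 — 2 statements merged into one kernel-verified Lean document; each statement's English description precedes it below -/
import Mathlib

section
/- Let ε ∈ (0,1), let A ⊆ ℕ be any set of type-2 update iterations, and let the scheduled density-evolution sequences be x_0 = y_0 = 1, x_{l+1} = f(ε, x_l, y_l) for all l ≥ 0, and y_{l+1} = g(ε, x_l, y_l) if l+1 ∈ A and y_{l+1} = y_l otherwise. Let ε1 := inf{ x / λ1(1−ρ1(1−x)) : x ∈ (0,1] }. If there exists an iteration l with ε·Λ2(1−ρ2(1−y_l)) < ε1, then the decoder succeeds: x_l → 0 as l → ∞. -/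
open Polynomial Set Filter Function

/-
Both sequences decrease: the iterate stays a post-fixed point of the monotone map `(f ε, g ε)`
on the unit square, whichever of the two updates is scheduled. Once the effective erasure
probability `c := ε·Λ2(1-ρ2(1-y_L))` is below `ε1`, it stays below it, so from iteration `L` on
`x_{l+1} ≤ c·λ1(1-ρ1(1-x_l))`. The limit `t` of `x_l` then satisfies `t ≤ c·λ1(1-ρ1(1-t))`,
which for `t > 0` contradicts `c < ε1 ≤ t / λ1(1-ρ1(1-t))`.
-/

namespace Polynomial

variable {P : ℝ[X]}

lemma eval_nonneg_of_coeff_nonneg (hP : ∀ i, 0 ≤ P.coeff i) {a : ℝ} (ha : 0 ≤ a) :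
    0 ≤ P.eval a := by
  rw [eval_eq_sum_range]
  exact Finset.sum_nonneg fun i _ => mul_nonneg (hP i) (pow_nonneg ha i)

lemma monotoneOn_eval_of_coeff_nonneg (hP : ∀ i, 0 ≤ P.coeff i) :
    MonotoneOn P.eval (Ici 0) := by
  intro a ha b _ hab
  simp only [eval_eq_sum_range]
  exact Finset.sum_le_sum fun i _ =>
    mul_le_mul_of_nonneg_left (pow_le_pow_left₀ ha hab i) (hP i)

lemma eval_le_one_of_coeff_nonneg (hP : ∀ i, 0 ≤ P.coeff i) (hP1 : P.eval 1 = 1) {a : ℝ}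
    (ha : a ∈ Icc 0 1) : P.eval a ≤ 1 :=
  hP1 ▸ monotoneOn_eval_of_coeff_nonneg hP ha.1 (mem_Ici.2 zero_le_one) ha.2

end Polynomial

/-- Erasure density evolution `x ↦ λ(1 - ρ(1 - x))` with `λ = P`, `ρ = R`. -/
def erasureMap (P R : ℝ[X]) (x : ℝ) : ℝ := P.eval (1 - R.eval (1 - x))

section erasureMap

variable {P R : ℝ[X]}

lemma continuous_erasureMap : Continuous (erasureMap P R) := by
  unfold erasureMap
  fun_prop

lemma one_sub_eval_one_sub_mem_Icc (hR : ∀ i, 0 ≤ R.coeff i) (hR1 : R.eval 1 = 1) {x : ℝ}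
    (hx : x ∈ Icc 0 1) : 1 - R.eval (1 - x) ∈ Icc 0 1 := by
  have hx' : 1 - x ∈ Icc 0 1 := ⟨by linarith [hx.2], by linarith [hx.1]⟩
  constructor
  · linarith [eval_le_one_of_coeff_nonneg hR hR1 hx']
  · linarith [eval_nonneg_of_coeff_nonneg hR hx'.1]

lemma mapsTo_erasureMap (hP : ∀ i, 0 ≤ P.coeff i) (hR : ∀ i, 0 ≤ R.coeff i)
    (hP1 : P.eval 1 = 1) (hR1 : R.eval 1 = 1) :
    MapsTo (erasureMap P R) (Icc 0 1) (Icc 0 1) := fun _ hx =>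
  have hy := one_sub_eval_one_sub_mem_Icc hR hR1 hx
  ⟨eval_nonneg_of_coeff_nonneg hP hy.1, eval_le_one_of_coeff_nonneg hP hP1 hy⟩

lemma monotoneOn_erasureMap (hP : ∀ i, 0 ≤ P.coeff i) (hR : ∀ i, 0 ≤ R.coeff i)
    (hR1 : R.eval 1 = 1) : MonotoneOn (erasureMap P R) (Icc 0 1) := by
  intro a ha b hb hab
  apply monotoneOn_eval_of_coeff_nonneg hP (one_sub_eval_one_sub_mem_Icc hR hR1 ha).1
    (one_sub_eval_one_sub_mem_Icc hR hR1 hb).1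
  have := monotoneOn_eval_of_coeff_nonneg hR (show 0 ≤ 1 - b by linarith [hb.2])
    (show 0 ≤ 1 - a by linarith [ha.2]) (by linarith)
  linarith

end erasureMap

section unitSquare

variable {u v : ℝ → ℝ} {ε : ℝ}

lemma mapsTo_mul_mul (hε : ε ∈ Icc 0 1) (hu : MapsTo u (Icc 0 1) (Icc 0 1))
    (hv : MapsTo v (Icc 0 1) (Icc 0 1)) :
    MapsTo (fun p : ℝ × ℝ => ε * u p.1 * v p.2) (Icc 0 1) (Icc 0 1) := by
  intro p hp
  rw [Icc_prod_eq] at hp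
  obtain ⟨hu0, hu1⟩ := hu hp.1
  obtain ⟨hv0, hv1⟩ := hv hp.2
  exact ⟨mul_nonneg (mul_nonneg hε.1 hu0) hv0, mul_le_one₀ (mul_le_one₀ hε.2 hu0 hu1) hv0 hv1⟩

lemma monotoneOn_mul_mul (hε : 0 ≤ ε) (hu : MapsTo u (Icc 0 1) (Icc 0 1))
    (hv : MapsTo v (Icc 0 1) (Icc 0 1)) (hum : MonotoneOn u (Icc 0 1))
    (hvm : MonotoneOn v (Icc 0 1)) :
    MonotoneOn (fun p : ℝ × ℝ => ε * u p.1 * v p.2) (Icc 0 1) := by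
  intro p hp q hq hpq
  rw [Icc_prod_eq] at hp hq
  simp only [mul_assoc]
  gcongr
  · exact (hv hp.2).1
  · exact (hu hq.1).1
  · exact hum hp.1 hq.1 hpq.1
  · exact hvm hp.2 hq.2 hpq.2

end unitSquare

structure IsScheduledIteration (F G : ℝ → ℝ → ℝ) (A : Set ℕ) (xs ys : ℕ → ℝ) : Prop where
  x_zero : xs 0 = 1
  y_zero : ys 0 = 1
  x_succ : ∀ l, xs (l + 1) = F (xs l) (ys l)
  y_succ_of_mem : ∀ l, l + 1 ∈ A → ys (l + 1) = G (xs l) (ys l)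
  y_succ_of_not_mem : ∀ l, l + 1 ∉ A → ys (l + 1) = ys l

namespace IsScheduledIteration

variable {F G : ℝ → ℝ → ℝ} {A : Set ℕ} {xs ys : ℕ → ℝ}

lemma y_succ_eq_or (h : IsScheduledIteration F G A xs ys) (l : ℕ) :
    ys (l + 1) = G (xs l) (ys l) ∨ ys (l + 1) = ys l := by
  by_cases hA : l + 1 ∈ A
  · exact .inl (h.y_succ_of_mem l hA)
  · exact .inr (h.y_succ_of_not_mem l hA)

lemma mem_Icc (h : IsScheduledIteration F G A xs ys)
    (hF : MapsTo (uncurry F) (Icc 0 1) (Icc 0 1)) (hG : MapsTo (uncurry G) (Icc 0 1) (Icc 0 1))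
    (l : ℕ) : (xs l, ys l) ∈ Icc 0 1 := by
  induction l with
  | zero => rw [h.x_zero, h.y_zero]; exact right_mem_Icc.2 zero_le_one
  | succ l ih =>
    have hx := hF ih
    have hy := hG ih
    rw [Icc_prod_eq] at ih ⊢
    refine ⟨(h.x_succ l).symm ▸ hx, ?_⟩
    rcases h.y_succ_eq_or l with e | e <;> rw [e]
    exacts [hy, ih.2]

lemma succ_le (h : IsScheduledIteration F G A xs ys) {l : ℕ}
    (hl : (F (xs l) (ys l), G (xs l) (ys l)) ≤ (xs l, ys l)) :
    (xs (l + 1), ys (l + 1)) ≤ (xs l, ys l) := by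
  refine ⟨(h.x_succ l).trans_le hl.1, ?_⟩
  rcases h.y_succ_eq_or l with hy | hy <;> rw [hy]
  exact hl.2

lemma apply_le (h : IsScheduledIteration F G A xs ys)
    (hF : MapsTo (uncurry F) (Icc 0 1) (Icc 0 1)) (hG : MapsTo (uncurry G) (Icc 0 1) (Icc 0 1))
    (hFm : MonotoneOn (uncurry F) (Icc 0 1)) (hGm : MonotoneOn (uncurry G) (Icc 0 1)) (l : ℕ) :
    (F (xs l) (ys l), G (xs l) (ys l)) ≤ (xs l, ys l) := by
  induction l with
  | zero =>
    have h11 : ((1 : ℝ), (1 : ℝ)) ∈ Icc (0 : ℝ × ℝ) 1 := right_mem_Icc.2 zero_le_one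
    rw [h.x_zero, h.y_zero]
    exact ⟨(hF h11).2, (hG h11).2⟩
  | succ l ih =>
    have hstep := h.succ_le ih
    have hl := h.mem_Icc hF hG l
    have hl' := h.mem_Icc hF hG (l + 1)
    refine ⟨(hFm hl' hl hstep).trans_eq (h.x_succ l).symm, (hGm hl' hl hstep).trans ?_⟩
    show G (xs l) (ys l) ≤ ys (l + 1)
    rcases h.y_succ_eq_or l with e | e
    · exact e.ge
    · exact e ▸ ih.2

lemma antitone (h : IsScheduledIteration F G A xs ys)
    (hF : MapsTo (uncurry F) (Icc 0 1) (Icc 0 1)) (hG : MapsTo (uncurry G) (Icc 0 1) (Icc 0 1))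
    (hFm : MonotoneOn (uncurry F) (Icc 0 1)) (hGm : MonotoneOn (uncurry G) (Icc 0 1)) :
    Antitone fun l => (xs l, ys l) :=
  antitone_nat_of_succ_le fun l => h.succ_le (h.apply_le hF hG hFm hGm l)

end IsScheduledIteration

lemma tendsto_zero_of_le_mul_of_lt_sInf_div {u : ℝ → ℝ} (hu : Continuous u)
    (hu0 : ∀ x ∈ Ioc 0 1, 0 ≤ u x) {xs : ℕ → ℝ} (hxs : ∀ l, xs l ∈ Icc 0 1)
    (hanti : Antitone xs) {c : ℝ} (hstep : ∀ᶠ l in atTop, xs (l + 1) ≤ c * u (xs l))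
    (hc : c < sInf ((fun x => x / u x) '' Ioc 0 1)) : Tendsto xs atTop (nhds 0) := by
  obtain ⟨t, ht⟩ : ∃ t, Tendsto xs atTop (nhds t) :=
    ⟨_, tendsto_atTop_ciInf hanti ⟨0, by rintro _ ⟨l, rfl⟩; exact (hxs l).1⟩⟩
  have ht01 : t ∈ Icc 0 1 := isClosed_Icc.mem_of_tendsto ht (.of_forall hxs)
  have hfix : t ≤ c * u t :=
    le_of_tendsto_of_tendsto (ht.comp (tendsto_add_atTop_nat 1))
      (((continuous_const.mul hu).tendsto t).comp ht) hstep
  obtain rfl | htpos := ht01.1.eq_or_lt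
  · exact ht
  exfalso
  have htmem : t ∈ Ioc 0 1 := ⟨htpos, ht01.2⟩
  have hut : 0 < u t := (hu0 t htmem).lt_of_ne fun h => by
    rw [← h, mul_zero] at hfix
    linarith
  have hle : sInf ((fun x => x / u x) '' Ioc 0 1) ≤ t / u t :=
    csInf_le ⟨0, by rintro _ ⟨x, hx, rfl⟩; exact div_nonneg hx.1.le (hu0 x hx)⟩ ⟨t, htmem, rfl⟩
  linarith [(lt_div_iff₀ hut).1 (hc.trans_le hle)]

theorem stmt_14_general
    (L1 R1 L2 R2 B1 B2 : Polynomial ℝ)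
    (hL1c : ∀ i, 0 ≤ L1.coeff i) (hR1c : ∀ i, 0 ≤ R1.coeff i)
    (hL2c : ∀ i, 0 ≤ L2.coeff i) (hR2c : ∀ i, 0 ≤ R2.coeff i)
    (hB1c : ∀ i, 0 ≤ B1.coeff i) (hB2c : ∀ i, 0 ≤ B2.coeff i)
    (hL1one : L1.eval 1 = 1) (hR1one : R1.eval 1 = 1)
    (hL2one : L2.eval 1 = 1) (hR2one : R2.eval 1 = 1)
    (hB1one : B1.eval 1 = 1) (hB2one : B2.eval 1 = 1)
    (f g : ℝ → ℝ → ℝ → ℝ)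
    (hf : ∀ ε x y, f ε x y = ε * L1.eval (1 - R1.eval (1 - x)) * B2.eval (1 - R2.eval (1 - y)))
    (hg : ∀ ε x y, g ε x y = ε * B1.eval (1 - R1.eval (1 - x)) * L2.eval (1 - R2.eval (1 - y)))
    (ε : ℝ) (hε : ε ∈ Ioo (0:ℝ) 1)
    (A : Set ℕ)
    (xs ys : ℕ → ℝ)
    (hxs0 : xs 0 = 1) (hys0 : ys 0 = 1)
    (hxsrec : ∀ l, xs (l + 1) = f ε (xs l) (ys l))
    (hysrecA : ∀ l, l + 1 ∈ A → ys (l + 1) = g ε (xs l) (ys l))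
    (hysrecB : ∀ l, l + 1 ∉ A → ys (l + 1) = ys l)
    (ε1 : ℝ)
    (hε1 : ε1 = sInf ((fun x => x / L1.eval (1 - R1.eval (1 - x))) '' Ioc (0:ℝ) 1))
    (hdrop : ∃ l, ε * B2.eval (1 - R2.eval (1 - ys l)) < ε1) :
    Tendsto xs atTop (nhds 0) := by
  have hε01 : ε ∈ Icc 0 1 := Ioo_subset_Icc_self hε
  have hmapL1 := mapsTo_erasureMap hL1c hR1c hL1one hR1one
  have hmapB1 := mapsTo_erasureMap hB1c hR1c hB1one hR1one
  have hmapL2 := mapsTo_erasureMap hL2c hR2c hL2one hR2one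
  have hmapB2 := mapsTo_erasureMap hB2c hR2c hB2one hR2one
  have hF : uncurry (f ε) = fun p => ε * erasureMap L1 R1 p.1 * erasureMap B2 R2 p.2 :=
    funext fun p => hf ε p.1 p.2
  have hG : uncurry (g ε) = fun p => ε * erasureMap B1 R1 p.1 * erasureMap L2 R2 p.2 :=
    funext fun p => hg ε p.1 p.2
  have hsched : IsScheduledIteration (f ε) (g ε) A xs ys :=
    ⟨hxs0, hys0, hxsrec, hysrecA, hysrecB⟩
  have hFmaps := hF ▸ mapsTo_mul_mul hε01 hmapL1 hmapB2
  have hGmaps := hG ▸ mapsTo_mul_mul hε01 hmapB1 hmapL2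
  have hanti := hsched.antitone hFmaps hGmaps
    (hF ▸ monotoneOn_mul_mul hε01.1 hmapL1 hmapB2 (monotoneOn_erasureMap hL1c hR1c hR1one)
      (monotoneOn_erasureMap hB2c hR2c hR2one))
    (hG ▸ monotoneOn_mul_mul hε01.1 hmapB1 hmapL2 (monotoneOn_erasureMap hB1c hR1c hR1one)
      (monotoneOn_erasureMap hL2c hR2c hR2one))
  have hmem l := Icc_prod_eq (0 : ℝ × ℝ) 1 ▸ hsched.mem_Icc hFmaps hGmaps l
  obtain ⟨L, hL⟩ := hdrop
  refine tendsto_zero_of_le_mul_of_lt_sInf_div continuous_erasureMap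
    (fun x hx => (hmapL1 (Ioc_subset_Icc_self hx)).1) (fun l => (hmem l).1)
    (fun _ _ hab => (hanti hab).1) ?_ (hε1 ▸ hL)
  filter_upwards [eventually_ge_atTop L] with l hl
  have heffL : erasureMap B2 R2 (ys l) ≤ erasureMap B2 R2 (ys L) :=
    monotoneOn_erasureMap hB2c hR2c hR2one (hmem l).2 (hmem L).2 (hanti hl).2
  calc xs (l + 1) = ε * erasureMap B2 R2 (ys l) * erasureMap L1 R1 (xs l) := by
        rw [hxsrec, hf, erasureMap, erasureMap]; ring
    _ ≤ ε * erasureMap B2 R2 (ys L) * erasureMap L1 R1 (xs l) := by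
        gcongr
        exacts [(hmapL1 (hmem l).1).1, hε01.1]

/-- Lemma 11 (sufficiency direction): under any scheduling of type-2 updates, if at some
iteration the effective erasure probability drops below the layer-1 threshold `ε1`, then
decoding succeeds: `x_l → 0`. -/
theorem stmt_14
    (L1 R1 L2 R2 B1 B2 : Polynomial ℝ)
    (hL1c : ∀ i, 0 ≤ L1.coeff i) (hR1c : ∀ i, 0 ≤ R1.coeff i)
    (hL2c : ∀ i, 0 ≤ L2.coeff i) (hR2c : ∀ i, 0 ≤ R2.coeff i)
    (hB1c : ∀ i, 0 ≤ B1.coeff i) (hB2c : ∀ i, 0 ≤ B2.coeff i)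
    (hL1one : L1.eval 1 = 1) (hR1one : R1.eval 1 = 1)
    (hL2one : L2.eval 1 = 1) (hR2one : R2.eval 1 = 1)
    (hB1one : B1.eval 1 = 1) (hB2one : B2.eval 1 = 1)
    (hL1zero : L1.eval 0 = 0) (hB10 : B1.coeff 0 = 0) (hB11 : B1.coeff 1 = 0)
    (f g : ℝ → ℝ → ℝ → ℝ)
    (hf : ∀ ε x y, f ε x y = ε * L1.eval (1 - R1.eval (1 - x)) * B2.eval (1 - R2.eval (1 - y)))
    (hg : ∀ ε x y, g ε x y = ε * B1.eval (1 - R1.eval (1 - x)) * L2.eval (1 - R2.eval (1 - y)))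
    (ε : ℝ) (hε : ε ∈ Ioo (0:ℝ) 1)
    (A : Set ℕ)
    (xs ys : ℕ → ℝ)
    (hxs0 : xs 0 = 1) (hys0 : ys 0 = 1)
    (hxsrec : ∀ l, xs (l + 1) = f ε (xs l) (ys l))
    (hysrecA : ∀ l, l + 1 ∈ A → ys (l + 1) = g ε (xs l) (ys l))
    (hysrecB : ∀ l, l + 1 ∉ A → ys (l + 1) = ys l)
    (ε1 : ℝ)
    (hε1 : ε1 = sInf ((fun x => x / L1.eval (1 - R1.eval (1 - x))) '' Ioc (0:ℝ) 1))
    (hdrop : ∃ l, ε * B2.eval (1 - R2.eval (1 - ys l)) < ε1) :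
    Tendsto xs atTop (nhds 0) :=
  stmt_14_general L1 R1 L2 R2 B1 B2 hL1c hR1c hL2c hR2c hB1c hB2c hL1one hR1one hL2one hR2one hB1one
    hB2one f g hf hg ε hε A xs ys hxs0 hys0 hxsrec hysrecA hysrecB ε1 hε1 hdrop
end

section
/- Let 0 < ε1 < ε < 1 and, for each k ∈ ℕ, let λ^{(k)}, ρ^{(k)} : ℝ → ℝ be polynomial functions with nonnegative coefficients satisfying λ^{(k)}(1) = ρ^{(k)}(1) = 1. Assume the sequence is capacity-approaching for the BEC(ε1): for every x ∈ [0, ε1], ε1·λ^{(k)}(1−ρ^{(k)}(1−x)) → x as k → ∞. Define x_s^{(k)}(ε) := sup{ x ∈ [0,1] : ε·λ^{(k)}(1−ρ^{(k)}(1−x)) ≥ x }. Then lim_{k→∞} x_s^{(k)}(ε) = ε. -/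
/-!
Write `g_k(x) = λ_k(1 - ρ_k(1 - x))`. Nonnegative coefficients and `λ_k(1) = ρ_k(1) = 1` make
`g_k` a monotone self-map of `[0, 1]`, so every `x` with `x ≤ ε g_k(x)` satisfies `x ≤ ε`, i.e.
`x_s ≤ ε`. Conversely, capacity-approaching at the single point `ε1` gives `g_k(ε1) → 1`; for any
`x₀ ∈ [ε1, ε)` monotonicity then yields eventually `x₀ < ε g_k(ε1) ≤ ε g_k(x₀)`, so `x₀ ≤ x_s`.
-/

open Polynomial Set Filter Topology

namespace Polynomial

variable {R : Type*} [Semiring R] [PartialOrder R] [IsOrderedRing R] {p : R[X]}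

lemma eval_nonneg_of_coeff_nonneg_s17 (hp : ∀ i, 0 ≤ p.coeff i) {x : R} (hx : 0 ≤ x) :
    0 ≤ p.eval x := by
  rw [eval_eq_sum_range]
  exact Finset.sum_nonneg fun i _ => mul_nonneg (hp i) (pow_nonneg hx i)

lemma monotoneOn_eval_of_coeff_nonneg_s17 (hp : ∀ i, 0 ≤ p.coeff i) :
    MonotoneOn (fun x => p.eval x) (Ici 0) := by
  intro x hx y _ hxy
  simp only [eval_eq_sum_range]
  exact Finset.sum_le_sum fun i _ =>
    mul_le_mul_of_nonneg_left (pow_le_pow_left₀ hx hxy i) (hp i)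

lemma eval_mem_Icc_of_coeff_nonneg (hp : ∀ i, 0 ≤ p.coeff i) (hp1 : p.eval 1 = 1) {x : R}
    (hx : x ∈ Icc 0 1) : p.eval x ∈ Icc 0 1 :=
  ⟨eval_nonneg_of_coeff_nonneg_s17 hp hx.1,
    hp1 ▸ monotoneOn_eval_of_coeff_nonneg_s17 hp hx.1 (mem_Ici.2 zero_le_one) hx.2⟩

end Polynomial

section DensityEvolution

variable {p q : ℝ[X]}

lemma one_sub_eval_one_sub_mem_Icc_s17 (hq : ∀ i, 0 ≤ q.coeff i) (hq1 : q.eval 1 = 1) {x : ℝ}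
    (hx : x ∈ Icc 0 1) : 1 - q.eval (1 - x) ∈ Icc 0 1 := by
  have := eval_mem_Icc_of_coeff_nonneg hq hq1 (x := 1 - x) ⟨by linarith [hx.2], by linarith [hx.1]⟩
  exact ⟨by linarith [this.2], by linarith [this.1]⟩

lemma monotoneOn_one_sub_eval_one_sub (hq : ∀ i, 0 ≤ q.coeff i) :
    MonotoneOn (fun x => 1 - q.eval (1 - x)) (Icc 0 1) := by
  intro x hx y hy hxy
  have := monotoneOn_eval_of_coeff_nonneg_s17 hq (a := 1 - y) (b := 1 - x)
    (by simp [hy.2]) (by simp [hx.2]) (by linarith)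
  simp only at this ⊢
  linarith

lemma monotoneOn_eval_one_sub_eval_one_sub (hp : ∀ i, 0 ≤ p.coeff i) (hq : ∀ i, 0 ≤ q.coeff i)
    (hq1 : q.eval 1 = 1) : MonotoneOn (fun x => p.eval (1 - q.eval (1 - x))) (Icc 0 1) :=
  (monotoneOn_eval_of_coeff_nonneg_s17 hp).comp (monotoneOn_one_sub_eval_one_sub hq)
    fun _ hx => (one_sub_eval_one_sub_mem_Icc_s17 hq hq1 hx).1

lemma eval_one_sub_eval_one_sub_le_one (hp : ∀ i, 0 ≤ p.coeff i) (hq : ∀ i, 0 ≤ q.coeff i)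
    (hp1 : p.eval 1 = 1) (hq1 : q.eval 1 = 1) {x : ℝ} (hx : x ∈ Icc 0 1) :
    p.eval (1 - q.eval (1 - x)) ≤ 1 :=
  (eval_mem_Icc_of_coeff_nonneg hp hp1 (one_sub_eval_one_sub_mem_Icc_s17 hq hq1 hx)).2

end DensityEvolution

section StuckPoint

noncomputable def stuckPoint (ε : ℝ) (f : ℝ → ℝ) : ℝ :=
  sSup {x : ℝ | x ∈ Icc (0:ℝ) 1 ∧ x ≤ ε * f x}

variable {ε : ℝ} {f : ℝ → ℝ}

lemma stuckPoint_le (hε : 0 ≤ ε) (hf : ∀ x ∈ Icc (0:ℝ) 1, f x ≤ 1) : stuckPoint ε f ≤ ε :=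
  Real.sSup_le (fun x ⟨hx, hxf⟩ => hxf.trans (mul_le_of_le_one_right hε (hf x hx))) hε

lemma le_stuckPoint {x : ℝ} (hx : x ∈ Icc (0:ℝ) 1) (hxf : x ≤ ε * f x) : x ≤ stuckPoint ε f :=
  le_csSup ⟨1, fun _ hy => hy.1.2⟩ ⟨hx, hxf⟩

lemma tendsto_stuckPoint {f : ℕ → ℝ → ℝ} {c : ℝ} (hc : 0 ≤ c) (hcε : c < ε) (hε : ε ≤ 1)
    (hmono : ∀ k, MonotoneOn (f k) (Icc 0 1)) (hle : ∀ k, ∀ x ∈ Icc (0:ℝ) 1, f k x ≤ 1)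
    (hlim : Tendsto (fun k => f k c) atTop (𝓝 1)) :
    Tendsto (fun k => stuckPoint ε (f k)) atTop (𝓝 ε) := by
  have hε0 : 0 ≤ ε := hc.trans hcε.le
  refine tendsto_order.2 ⟨fun a ha => ?_, fun a ha =>
    Eventually.of_forall fun k => (stuckPoint_le hε0 (hle k)).trans_lt ha⟩
  set x₀ := max c ((a + ε) / 2)
  have hcx₀ : c ≤ x₀ := le_max_left _ _
  have hax₀ : a < x₀ := (by linarith : a < (a + ε) / 2).trans_le (le_max_right _ _)
  have hx₀ε : x₀ < ε := max_lt hcε (by linarith)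
  have hx₀ : x₀ ∈ Icc (0:ℝ) 1 := ⟨hc.trans hcx₀, hx₀ε.le.trans hε⟩
  have hεc : Tendsto (fun k => ε * f k c) atTop (𝓝 ε) := by
    simpa using hlim.const_mul ε
  filter_upwards [hεc.eventually_const_lt hx₀ε] with k hk
  refine hax₀.trans_le (le_stuckPoint hx₀ (hk.le.trans ?_))
  exact mul_le_mul_of_nonneg_left (hmono k ⟨hc, hcε.le.trans hε⟩ hx₀ hcx₀) hε0

end StuckPoint

/-- Lemma 10: for a capacity-approaching sequence for the BEC(`ε1`) and `ε1 < ε < 1`,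
the stuck points converge to `ε`. -/
theorem stmt_17
    (ε1 ε : ℝ) (hε1pos : 0 < ε1) (hε1ε : ε1 < ε) (hεlt : ε < 1)
    (lam rho : ℕ → Polynomial ℝ)
    (hlamc : ∀ k i, 0 ≤ (lam k).coeff i) (hrhoc : ∀ k i, 0 ≤ (rho k).coeff i)
    (hlamone : ∀ k, (lam k).eval 1 = 1) (hrhoone : ∀ k, (rho k).eval 1 = 1)
    (hca : ∀ x ∈ Icc (0:ℝ) ε1,
      Tendsto (fun k => ε1 * (lam k).eval (1 - (rho k).eval (1 - x))) atTop (nhds x))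
    (xstuck : ℕ → ℝ)
    (hxstuck : ∀ k, xstuck k =
      sSup {x : ℝ | x ∈ Icc (0:ℝ) 1 ∧ x ≤ ε * (lam k).eval (1 - (rho k).eval (1 - x))}) :
    Tendsto xstuck atTop (nhds ε) := by
  have hxs : xstuck = fun k => stuckPoint ε fun x => (lam k).eval (1 - (rho k).eval (1 - x)) :=
    funext hxstuck
  have hlim : Tendsto (fun k => (lam k).eval (1 - (rho k).eval (1 - ε1))) atTop (𝓝 1) := by
    simpa [hε1pos.ne'] using (hca ε1 ⟨hε1pos.le, le_rfl⟩).const_mul ε1⁻¹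
  rw [hxs]
  exact tendsto_stuckPoint hε1pos.le hε1ε hεlt.le
    (fun k => monotoneOn_eval_one_sub_eval_one_sub (hlamc k) (hrhoc k) (hrhoone k))
    (fun k _ hx => eval_one_sub_eval_one_sub_le_one (hlamc k) (hrhoc k) (hlamone k) (hrhoone k) hx)
    hlim
end
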